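/- arXiv:1305.4386 — 2 statements merged into one kernel-verified Lean document; each statement's English description precedes it below -/
import Mathlib

section
/- Let φ be an injective holomorphic function on an open neighborhood of the closed unit disk cl(𝔻) with φ'(w) ≠ 0 for all w. Then for every z ∈ φ(𝔻) and every ζ ∈ ℂ with |ζ| > 1, (1/2πi)∮_{∂𝔻} 1/((t−ζ)(z−φ(t))) dt = −1/((φ^{-1}(z) − ζ)·φ'(φ^{-1}(z))), where φ^{-1}(z) denotes the unique point w ∈ 𝔻 with φ(w) = z. -/
open Complex MeasureTheory Metric Set Filter Bornology

/-- Residue computation: for `φ` injective and holomorphic with nonvanishing derivative on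
a neighborhood of the closed unit disk, `z ∈ φ(𝔻)` and `|ζ| > 1`,
`(1/2πi) ∮_{∂𝔻} 1/((t-ζ)(z-φ(t))) dt = -1/((φ⁻¹(z)-ζ) ⬝ φ'(φ⁻¹(z)))`,
where `φ⁻¹(z)` is the unique point `w₀` of the unit disk with `φ(w₀) = z`. -/
theorem circleIntegral_residue (U : Set ℂ) (hU : IsOpen U)
    (hUball : Metric.closedBall 0 1 ⊆ U)
    (φ : ℂ → ℂ) (hφd : DifferentiableOn ℂ φ U) (hφi : Set.InjOn φ U)
    (hφ' : ∀ w ∈ U, deriv φ w ≠ 0)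
    (z ζ : ℂ) (hζ : 1 < ‖ζ‖)
    (w₀ : ℂ) (hw₀ : w₀ ∈ Metric.ball (0:ℂ) 1) (hφw₀ : φ w₀ = z) :
    (1 / (2 * Real.pi * Complex.I)) *
        (∮ t in C((0:ℂ), 1), 1 / ((t - ζ) * (z - φ t))) =
      -(1 / ((w₀ - ζ) * deriv φ w₀)) := by
  have hw₀U : w₀ ∈ U := hUball (ball_subset_closedBall hw₀)
  have hUnb : U ∈ nhds w₀ := hU.mem_nhds hw₀U
  have hds : DifferentiableOn ℂ (dslope φ w₀) U :=
    (Complex.differentiableOn_dslope hUnb).mpr hφd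
  have hdsne : ∀ t ∈ Metric.closedBall (0:ℂ) 1, dslope φ w₀ t ≠ 0 := by
    intro t ht
    have htU : t ∈ U := hUball ht
    rcases eq_or_ne t w₀ with rfl | hne
    · simpa [dslope_same] using hφ' t htU
    · rw [dslope_of_ne _ hne, slope_def_field]
      exact div_ne_zero (sub_ne_zero.mpr fun h => hne (hφi htU hw₀U h))
        (sub_ne_zero.mpr hne)
  have htζ : ∀ t ∈ Metric.closedBall (0:ℂ) 1, t - ζ ≠ 0 := by
    intro t ht
    intro h
    have : t = ζ := sub_eq_zero.mp h
    rw [this] at ht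
    simp only [Metric.mem_closedBall, dist_zero_right] at ht
    linarith
  set g : ℂ → ℂ := fun t => -((t - ζ) * dslope φ w₀ t)⁻¹ with hg_def
  have hgdiff : DifferentiableOn ℂ g (Metric.closedBall (0:ℂ) 1) := by
    apply DifferentiableOn.neg
    exact (((differentiableOn_id.sub (differentiableOn_const ζ)).mul
      (hds.mono hUball)).inv fun t ht => mul_ne_zero (htζ t ht) (hdsne t ht))
  have hgc : DiffContOnCl ℂ g (Metric.ball (0:ℂ) 1) := by
    apply DifferentiableOn.diffContOnCl
    rwa [closure_ball (0:ℂ) one_ne_zero]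
  have key := hgc.circleIntegral_sub_inv_smul hw₀
  have heq : Set.EqOn (fun t => 1 / ((t - ζ) * (z - φ t)))
      (fun t => (t - w₀)⁻¹ • g t) (Metric.sphere (0:ℂ) 1) := by
    intro t ht
    have htcb : t ∈ Metric.closedBall (0:ℂ) 1 := sphere_subset_closedBall ht
    have hne : t ≠ w₀ := by
      intro h
      rw [mem_sphere_zero_iff_norm] at ht
      rw [h] at ht
      rw [mem_ball_zero_iff, ht] at hw₀
      exact lt_irrefl 1 hw₀
    have h1 : z - φ t = -((t - w₀) * dslope φ w₀ t) := by
      have := sub_smul_dslope φ w₀ t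
      rw [smul_eq_mul] at this
      rw [← hφw₀, this]; ring
    simp only [hg_def, smul_eq_mul, h1]
    have h2 := htζ t htcb
    have h3 := hdsne t htcb
    have h4 : t - w₀ ≠ 0 := sub_ne_zero.mpr hne
    field_simp
  rw [circleIntegral.integral_congr zero_le_one heq, key]
  have h2pi : (2 * Real.pi * Complex.I : ℂ) ≠ 0 := by
    simp [Real.pi_ne_zero, Complex.I_ne_zero]
  rw [smul_eq_mul]
  rw [one_div, ← mul_assoc, inv_mul_cancel₀ h2pi, one_mul]
  simp only [hg_def, dslope_same]
  rw [one_div]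
end

section
/- Let G ⊂ ℂ be a bounded domain with boundary of planar Lebesgue measure zero, let g ∈ B₂(G), and let γ = Kg be its Cauchy transform. Let φ be an injective holomorphic function on an open neighborhood of the closed unit disk cl(𝔻) such that cl(G) ⊂ φ(𝔻). Then for every ζ ∈ ℂ with |ζ| > 1, (1/2πi)∮_{∂𝔻} γ(φ(t))/(t−ζ) dt = −(1/π)∬_{φ^{-1}(G)} conj(g(φ(w))·φ'(w))/(w−ζ) du dv, where φ^{-1}(G) ⊂ 𝔻 is the preimage of G under φ and w = u + iv. -/
/-!
Substituting `z = φ w` turns `Kg (φ t)` into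
`(1/π) ∫_{φ⁻¹(G) ∩ 𝔻} conj (g (φ w)) |φ'(w)|² / (φ w - φ t)`.
Since `φ` is injective on the closed disk and `cl G ⊆ φ(𝔻)`, the compact curve `φ(∂𝔻)` stays a
positive distance away from `G`, so the kernel is bounded and Fubini exchanges the circle and area
integrals. For fixed `w ∈ 𝔻` with `φ'(w) ≠ 0`, injectivity makes
`t ↦ (t - w) / ((t - ζ) (φ t - φ w))` holomorphic near the closed disk, and Cauchy's formula gives
`∮ dt / ((t - ζ) (φ w - φ t)) = -2πi / ((w - ζ) φ'(w))`; finally `|φ'|² / φ' = conj φ'`.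
-/

open Complex MeasureTheory Metric Set Filter Bornology

/-- Membership in the Bergman space `B₂(G)`: holomorphic with square-integrable modulus. -/
def MemB2 (G : Set ℂ) (g : ℂ → ℂ) : Prop :=
  DifferentiableOn ℂ g G ∧ IntegrableOn (fun z => ‖g z‖ ^ 2) G volume

/-- The Cauchy transform `(Kg)(ζ) = (1/π) ∬_G conj (g z) / (z - ζ) dx dy`. -/
noncomputable def cauchyTransform (G : Set ℂ) (g : ℂ → ℂ) (ζ : ℂ) : ℂ :=
  (1 / Real.pi : ℂ) * ∫ z in G, (starRingEnd ℂ) (g z) / (z - ζ) ∂volume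

open ComplexConjugate

theorem MemB2.integrableOn {G : Set ℂ} {g : ℂ → ℂ} (hg : MemB2 G g) (hGo : IsOpen G)
    (hGb : IsBounded G) : IntegrableOn g G := by
  have : IsFiniteMeasure (volume.restrict G) := ⟨by simpa using hGb.measure_lt_top⟩
  exact ((memLp_two_iff_integrable_sq_norm
    (hg.1.continuousOn.aestronglyMeasurable hGo.measurableSet)).2 hg.2).integrable one_le_two

theorem Complex.det_restrictScalars_toSpanSingleton (d : ℂ) :
    ((ContinuousLinearMap.toSpanSingleton ℂ d).restrictScalars ℝ).det = normSq d := by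
  simp [ContinuousLinearMap.det, LinearMap.det_restrictScalars, Algebra.norm_complex_eq]

section ChangeOfVariables

variable {E : Type*} [NormedAddCommGroup E] [NormedSpace ℝ E] {s : Set ℂ} {φ φ' : ℂ → ℂ}

theorem integral_image_eq_integral_normSq_deriv_smul (hs : MeasurableSet s)
    (hφ : ∀ w ∈ s, HasDerivWithinAt φ (φ' w) s w) (hφi : InjOn φ s) (F : ℂ → E) :
    ∫ z in φ '' s, F z = ∫ w in s, normSq (φ' w) • F (φ w) := by
  simp [integral_image_eq_integral_abs_det_fderiv_smul volume hs
    (fun w hw => (hφ w hw).hasFDerivWithinAt.restrictScalars ℝ) hφi,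
    det_restrictScalars_toSpanSingleton, _root_.abs_of_nonneg (normSq_nonneg _)]

theorem integrableOn_image_iff_integrableOn_normSq_deriv_smul (hs : MeasurableSet s)
    (hφ : ∀ w ∈ s, HasDerivWithinAt φ (φ' w) s w) (hφi : InjOn φ s) (F : ℂ → E) :
    IntegrableOn F (φ '' s) ↔ IntegrableOn (fun w => normSq (φ' w) • F (φ w)) s := by
  simp [integrableOn_image_iff_integrableOn_abs_det_fderiv_smul volume hs
    (fun w hw => (hφ w hw).hasFDerivWithinAt.restrictScalars ℝ) hφi,
    det_restrictScalars_toSpanSingleton, _root_.abs_of_nonneg (normSq_nonneg _)]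

end ChangeOfVariables

theorem circleIntegral_setIntegral_swap {α E : Type*} [TopologicalSpace α]
    [SecondCountableTopology α] [MeasurableSpace α] [OpensMeasurableSpace α]
    [NormedAddCommGroup E] [NormedSpace ℂ E] [CompleteSpace E] {μ : Measure α} [SFinite μ]
    {s : Set α} (hs : MeasurableSet s) {c : ℂ} {R : ℝ} {F : ℂ → α → E} {b : α → ℝ}
    (hF : ContinuousOn (fun p : ℂ × α => F p.1 p.2) (sphere c |R| ×ˢ s))
    (hb : IntegrableOn b s μ) (hFb : ∀ t ∈ sphere c |R|, ∀ x ∈ s, ‖F t x‖ ≤ b x) :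
    (∮ t in C(c, R), ∫ x in s, F t x ∂μ) = ∫ x in s, ∮ t in C(c, R), F t x ∂μ := by
  set u : ℝ × α → E := fun p => (circleMap 0 R p.1 * I) • F (circleMap c R p.1) p.2
  have hT : MeasurableSet (Ioc 0 (2 * Real.pi) ×ˢ s) := measurableSet_Ioc.prod hs
  have hu : Integrable u ((volume.restrict (Ioc 0 (2 * Real.pi))).prod (μ.restrict s)) := by
    refine ((integrable_const |R|).mul_prod hb).mono' ?_ ?_ <;> rw [Measure.prod_restrict]
    · refine ContinuousOn.aestronglyMeasurable ?_ hT
      exact ContinuousOn.smul (by fun_prop)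
        (hF.comp (f := fun p : ℝ × α => (circleMap c R p.1, p.2)) (by fun_prop)
          fun p hp => ⟨circleMap_mem_sphere' c R p.1, hp.2⟩)
    · refine ae_restrict_of_forall_mem hT fun p hp => ?_
      simp only [u, norm_smul, norm_mul, norm_circleMap_zero, norm_I, mul_one]
      gcongr
      exact hFb _ (circleMap_mem_sphere' c R p.1) _ hp.2
  calc (∮ t in C(c, R), ∫ x in s, F t x ∂μ)
      = ∫ θ in Ioc 0 (2 * Real.pi), ∫ x in s, u (θ, x) ∂μ := by
        simp only [circleIntegral, intervalIntegral.integral_of_le Real.two_pi_pos.le,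
          deriv_circleMap, u, integral_smul]
    _ = ∫ x in s, (∫ θ in Ioc 0 (2 * Real.pi), u (θ, x)) ∂μ := integral_integral_swap hu
    _ = ∫ x in s, ∮ t in C(c, R), F t x ∂μ := by
        simp only [circleIntegral, intervalIntegral.integral_of_le Real.two_pi_pos.le,
          deriv_circleMap, u]

theorem circleIntegral_setIntegral_mul_div_sub_swap {s : Set ℂ} (hs : MeasurableSet s) {c : ℂ}
    {R ε : ℝ} (hR : 0 ≤ R) (hε : 0 < ε) {a f φ : ℂ → ℂ} (ha : IntegrableOn a s)
    (hac : ContinuousOn a s) (hf : ContinuousOn f (sphere c R))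
    (hφ : ContinuousOn φ (sphere c R ∪ s)) (hsep : ∀ t ∈ sphere c R, ∀ w ∈ s, ε ≤ ‖φ w - φ t‖) :
    (∮ t in C(c, R), ∫ w in s, a w * (f t / (φ w - φ t))) =
      ∫ w in s, a w * ∮ t in C(c, R), f t / (φ w - φ t) := by
  rw [← abs_of_nonneg hR] at hf hφ hsep
  obtain ⟨C, hC⟩ := (isCompact_sphere c |R|).exists_bound_of_continuousOn hf
  have hne : ∀ t ∈ sphere c |R|, ∀ w ∈ s, φ w - φ t ≠ 0 := fun t ht w hw h =>
    hε.not_ge (by simpa [h] using hsep t ht w hw)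
  rw [circleIntegral_setIntegral_swap hs (b := fun w => ‖a w‖ * (C / ε)) ?_
    (ha.norm.mul_const _) ?_]
  · simp_rw [circleIntegral.integral_const_mul]
  · exact (hac.comp continuousOn_snd fun p hp => hp.2).mul
      ((hf.comp continuousOn_fst fun p hp => hp.1).div
        ((hφ.comp continuousOn_snd fun p hp => Or.inr hp.2).sub
          (hφ.comp continuousOn_fst fun p hp => Or.inl hp.1))
        fun p hp => hne _ hp.1 _ hp.2)
  · intro t ht w hw
    rw [norm_mul, norm_div]
    gcongr
    · exact (norm_nonneg _).trans (hC t ht)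
    · exact hC t ht
    · exact hsep t ht w hw

theorem circleIntegral_div_sub_of_injOn {U : Set ℂ} (hU : IsOpen U) {c : ℂ} {R : ℝ}
    (hcU : closedBall c R ⊆ U) {φ f : ℂ → ℂ} (hφ : DifferentiableOn ℂ φ U) (hφi : InjOn φ U)
    (hf : DifferentiableOn ℂ f U) {w : ℂ} (hw : w ∈ ball c R) (hφw : deriv φ w ≠ 0) :
    (∮ t in C(c, R), f t / (φ t - φ w)) = (2 * Real.pi * I) * (f w / deriv φ w) := by
  have hwU : w ∈ U := hcU (ball_subset_closedBall hw)
  have hslope : DifferentiableOn ℂ (dslope φ w) U :=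
    (differentiableOn_dslope (hU.mem_nhds hwU)).2 hφ
  have hslope_ne : ∀ t ∈ U, dslope φ w t ≠ 0 := by
    intro t ht
    rcases eq_or_ne t w with rfl | htw
    · rwa [dslope_same]
    · rw [dslope_of_ne _ htw, slope_def_field]
      exact div_ne_zero (sub_ne_zero.2 fun h => htw (hφi ht hwU h)) (sub_ne_zero.2 htw)
  have hquot : DiffContOnCl ℂ (fun t => f t / dslope φ w t) (ball c R) :=
    (hf.div hslope hslope_ne).diffContOnCl_ball hcU
  have hcongr : EqOn (fun t => f t / (φ t - φ w)) (fun t => (t - w)⁻¹ • (f t / dslope φ w t))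
      (sphere c R) := by
    intro t ht
    have htw : t ≠ w := by rintro rfl; exact (mem_ball.1 hw).ne (mem_sphere.1 ht)
    have hφtw : φ t - φ w ≠ 0 :=
      sub_ne_zero.2 fun h => htw (hφi (hcU (sphere_subset_closedBall ht)) hwU h)
    have htw' : t - w ≠ 0 := sub_ne_zero.2 htw
    simp only [dslope_of_ne _ htw, slope_def_field, smul_eq_mul]
    field_simp
  rw [circleIntegral.integral_congr (pos_of_mem_ball hw).le hcongr,
    hquot.circleIntegral_sub_inv_smul hw, dslope_same, smul_eq_mul]

theorem exists_pos_le_norm_sub_image_sphere {c : ℂ} {R : ℝ} {φ : ℂ → ℂ}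
    (hφc : ContinuousOn φ (closedBall c R)) (hφi : InjOn φ (closedBall c R)) {K : Set ℂ}
    (hK : closure K ⊆ φ '' ball c R) : ∃ ε > 0, ∀ t ∈ sphere c R, ∀ z ∈ K, ε ≤ ‖z - φ t‖ := by
  have hdisj : Disjoint (φ '' sphere c R) (closure K) := by
    refine Set.disjoint_left.2 ?_
    rintro _ ⟨t, ht, rfl⟩ hφt
    obtain ⟨w, hw, hφw⟩ := hK hφt
    have := hφi (ball_subset_closedBall hw) (sphere_subset_closedBall ht) hφw
    exact (mem_ball.1 hw).ne (this ▸ mem_sphere.1 ht)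
  obtain ⟨r, hr, hsep⟩ := exists_pos_forall_lt_edist
    ((isCompact_sphere c R).image_of_continuousOn (hφc.mono sphere_subset_closedBall))
    isClosed_closure hdisj
  refine ⟨r, hr, fun t ht z hz => ?_⟩
  have := hsep _ (mem_image_of_mem φ ht) z (subset_closure hz)
  rw [edist_nndist, ENNReal.coe_lt_coe, ← NNReal.coe_lt_coe, coe_nndist, dist_comm,
    dist_eq_norm] at this
  exact this.le

noncomputable def conjPullback (φ g : ℂ → ℂ) (w : ℂ) : ℂ :=
  normSq (deriv φ w) • conj (g (φ w))

section conjPullback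

variable {φ g : ℂ → ℂ} {s : Set ℂ}

theorem continuousOn_conjPullback {U : Set ℂ} (hU : IsOpen U) (hφ : DifferentiableOn ℂ φ U)
    (hsU : s ⊆ U) (hg : ContinuousOn g (φ '' s)) : ContinuousOn (conjPullback φ g) s :=
  (continuous_normSq.comp_continuousOn ((hφ.analyticOnNhd hU).deriv.continuousOn.mono hsU)).smul
    (continuous_conj.comp_continuousOn
      (hg.comp (hφ.continuousOn.mono hsU) (mapsTo_image φ s)))

theorem integrableOn_conjPullback (hs : MeasurableSet s)
    (hφ : ∀ w ∈ s, HasDerivWithinAt φ (deriv φ w) s w) (hφi : InjOn φ s)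
    (hg : IntegrableOn g (φ '' s)) : IntegrableOn (conjPullback φ g) s := by
  have := (integrableOn_image_iff_integrableOn_normSq_deriv_smul hs hφ hφi g).1 hg
  show IntegrableOn (fun w => conjPullback φ g w) s
  simpa [IntegrableOn, conjPullback, real_smul] using
    conjCLE.toContinuousLinearMap.integrable_comp this

theorem cauchyTransform_image (hs : MeasurableSet s)
    (hφ : ∀ w ∈ s, HasDerivWithinAt φ (deriv φ w) s w) (hφi : InjOn φ s) (g : ℂ → ℂ) (z : ℂ) :
    cauchyTransform (φ '' s) g z =
      (1 / Real.pi : ℂ) * ∫ w in s, conjPullback φ g w / (φ w - z) := by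
  simp only [cauchyTransform, integral_image_eq_integral_normSq_deriv_smul hs hφ hφi,
    conjPullback, real_smul, mul_div_assoc]

theorem conjPullback_mul_circleIntegral {U : Set ℂ} (hU : IsOpen U) {c : ℂ} {R : ℝ}
    (hcU : closedBall c R ⊆ U) (hφ : DifferentiableOn ℂ φ U) (hφi : InjOn φ U) {ζ : ℂ}
    (hζ : ζ ∉ closedBall c R) {w : ℂ} (hw : w ∈ ball c R) :
    conjPullback φ g w * (∮ t in C(c, R), (t - ζ)⁻¹ / (φ w - φ t)) =
      -(2 * Real.pi * I) * (conj (g (φ w) * deriv φ w) / (w - ζ)) := by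
  by_cases hd : deriv φ w = 0
  · simp [conjPullback, hd]
  have hcUζ : closedBall c R ⊆ U ∩ {ζ}ᶜ := fun t ht => ⟨hcU ht, fun h => hζ (h ▸ ht)⟩
  have hwζ : w - ζ ≠ 0 := sub_ne_zero.2 fun h => hζ (h ▸ ball_subset_closedBall hw)
  have hkernel : (fun t => (t - ζ)⁻¹ / (φ w - φ t)) = fun t => -(t - ζ)⁻¹ / (φ t - φ w) :=
    funext fun t => by rw [← neg_sub (φ t), div_neg, neg_div]
  rw [hkernel, circleIntegral_div_sub_of_injOn (f := fun t => -(t - ζ)⁻¹)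
    (hU.inter isClosed_singleton.isOpen_compl) hcUζ (hφ.mono inter_subset_left)
    (hφi.mono inter_subset_left)
    (fun t ht => (((differentiableAt_id.sub (differentiableAt_const ζ)).inv
      (sub_ne_zero.2 ht.2)).neg).differentiableWithinAt) hw hd]
  simp only [conjPullback, real_smul, map_mul, ← mul_conj]
  field_simp

theorem circleIntegral_setIntegral_conjPullback_mul {U : Set ℂ} (hU : IsOpen U) {c : ℂ}
    {R ε : ℝ} (hR : 0 ≤ R) (hcU : closedBall c R ⊆ U) (hφ : DifferentiableOn ℂ φ U)
    (hφi : InjOn φ U) {ζ : ℂ} (hζ : ζ ∉ closedBall c R) (hs : MeasurableSet s)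
    (hsc : s ⊆ ball c R) (hε : 0 < ε) (hsep : ∀ t ∈ sphere c R, ∀ w ∈ s, ε ≤ ‖φ w - φ t‖)
    (hgc : ContinuousOn g (φ '' s)) (hgi : IntegrableOn g (φ '' s)) :
    (∮ t in C(c, R), ∫ w in s, conjPullback φ g w * ((t - ζ)⁻¹ / (φ w - φ t))) =
      -(2 * Real.pi * I) * ∫ w in s, conj (g (φ w) * deriv φ w) / (w - ζ) := by
  have hsU : s ⊆ U := hsc.trans (ball_subset_closedBall.trans hcU)
  have hζt : ∀ t ∈ sphere c R, t - ζ ≠ 0 := fun t ht =>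
    sub_ne_zero.2 fun h => hζ (h ▸ sphere_subset_closedBall ht)
  rw [circleIntegral_setIntegral_mul_div_sub_swap (f := fun t => (t - ζ)⁻¹) hs hR hε
      (integrableOn_conjPullback hs (fun w hw =>
        (hφ.hasDerivAt (hU.mem_nhds (hsU hw))).hasDerivWithinAt)
        (hφi.mono hsU) hgi)
      (continuousOn_conjPullback hU hφ hsU hgc)
      (fun t ht =>
        ((continuousAt_id.sub continuousAt_const).inv₀ (hζt t ht)).continuousWithinAt)
      (hφ.continuousOn.mono (union_subset (sphere_subset_closedBall.trans hcU) hsU)) hsep,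
    ← integral_const_mul]
  exact setIntegral_congr_fun hs fun w hw =>
    conjPullback_mul_circleIntegral hU hcU hφ hφi hζ (hsc hw)

end conjPullback

theorem circleIntegral_cauchyTransform_pullback_general (G : Set ℂ)
    (hGo : IsOpen G) (hGb : Bornology.IsBounded G)
    (g : ℂ → ℂ) (hg : MemB2 G g)
    (U : Set ℂ) (hU : IsOpen U) (hUball : Metric.closedBall 0 1 ⊆ U)
    (φ : ℂ → ℂ) (hφd : DifferentiableOn ℂ φ U) (hφi : Set.InjOn φ U)
    (hGsub : closure G ⊆ φ '' Metric.ball 0 1) :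
    ∀ ζ : ℂ, 1 < ‖ζ‖ →
      (1 / (2 * Real.pi * Complex.I)) *
          (∮ t in C((0:ℂ), 1), cauchyTransform G g (φ t) / (t - ζ)) =
        -((1 / Real.pi : ℂ) *
          ∫ w in φ ⁻¹' G ∩ Metric.ball 0 1,
            (starRingEnd ℂ) (g (φ w) * deriv φ w) / (w - ζ) ∂volume) := by
  intro ζ hζ
  set s := φ ⁻¹' G ∩ ball 0 1
  have hsU : s ⊆ U := fun w hw => hUball (ball_subset_closedBall hw.2)
  have hs : IsOpen s := by
    show IsOpen (φ ⁻¹' G ∩ ball 0 1)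
    rw [inter_comm]
    exact (hφd.continuousOn.mono (ball_subset_closedBall.trans hUball)).isOpen_inter_preimage
      isOpen_ball hGo
  have hGs : φ '' s = G := by
    rw [image_preimage_inter, inter_eq_left]
    exact subset_closure.trans hGsub
  obtain ⟨ε, hε, hsep⟩ := exists_pos_le_norm_sub_image_sphere
    (hφd.continuousOn.mono hUball) (hφi.mono hUball) hGsub
  have hK : ∀ t, cauchyTransform G g (φ t) / (t - ζ) =
      (1 / Real.pi : ℂ) * ∫ w in s, conjPullback φ g w * ((t - ζ)⁻¹ / (φ w - φ t)) := by
    intro t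
    rw [← hGs, cauchyTransform_image hs.measurableSet
      (fun w hw => (hφd.hasDerivAt (hU.mem_nhds (hsU hw))).hasDerivWithinAt) (hφi.mono hsU),
      mul_div_assoc, ← integral_div]
    congr 1
    exact integral_congr_ae (ae_of_all _ fun w => by ring)
  rw [circleIntegral.integral_congr zero_le_one fun t _ => hK t,
    circleIntegral.integral_const_mul,
    circleIntegral_setIntegral_conjPullback_mul hU zero_le_one hUball hφd hφi
      (fun h => (mem_closedBall_zero_iff.1 h).not_gt hζ) hs.measurableSet inter_subset_right
      hε (fun t ht w hw => hsep t ht _ hw.1) (hGs ▸ hg.1.continuousOn)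
      (hGs ▸ hg.integrableOn hGo hGb)]
  field_simp

/-- For `g ∈ B₂(G)` with Cauchy transform `γ = Kg` and `φ` injective holomorphic on a
neighborhood of the closed unit disk with `cl(G) ⊆ φ(𝔻)`, for every `|ζ| > 1`:
`(1/2πi) ∮_{∂𝔻} γ(φ(t))/(t-ζ) dt
  = -(1/π) ∬_{φ⁻¹(G)} conj (g(φ w) φ'(w)) / (w - ζ) du dv`. -/
theorem circleIntegral_cauchyTransform_pullback (G : Set ℂ)
    (hGo : IsOpen G) (hGc : IsConnected G) (hGb : Bornology.IsBounded G)
    (hbd : volume (frontier G) = 0)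
    (g : ℂ → ℂ) (hg : MemB2 G g)
    (U : Set ℂ) (hU : IsOpen U) (hUball : Metric.closedBall 0 1 ⊆ U)
    (φ : ℂ → ℂ) (hφd : DifferentiableOn ℂ φ U) (hφi : Set.InjOn φ U)
    (hGsub : closure G ⊆ φ '' Metric.ball 0 1) :
    ∀ ζ : ℂ, 1 < ‖ζ‖ →
      (1 / (2 * Real.pi * Complex.I)) *
          (∮ t in C((0:ℂ), 1), cauchyTransform G g (φ t) / (t - ζ)) =
        -((1 / Real.pi : ℂ) *
          ∫ w in φ ⁻¹' G ∩ Metric.ball 0 1,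
            (starRingEnd ℂ) (g (φ w) * deriv φ w) / (w - ζ) ∂volume) :=
  circleIntegral_cauchyTransform_pullback_general G hGo hGb g hg U hU hUball φ hφd hφi hGsub
end
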